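/- R(B_4, B_5) ≤ 19. That is: for every coloring of the edges of the complete graph on 19 vertices with 2 colors, either color 1 contains a subgraph isomorphic to the book B_4 or color 2 contains a subgraph isomorphic to the book B_5. -/

import Mathlib

/-- The book `Bₙ = K₂ + (n-2)·K₁` with `m = n - 2` pages: two spine vertices (the left
summand) adjacent to each other and to all `m` page vertices (the right summand), with no
edges among the page vertices. -/
def book (m : ℕ) : SimpleGraph (Fin 2 ⊕ Fin m) where
  Adj u v := u ≠ v ∧ (u.isLeft ∨ v.isLeft)
  symm := by
    constructor
    rintro u v ⟨h1, h2⟩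
    exact ⟨h1.symm, h2.symm⟩
  loopless := by
    constructor
    rintro u ⟨h, -⟩
    exact h rfl

/-- The coloring `c` of the edges of the complete graph on `Fin n` with `k` colors contains a
copy of `G` all of whose edges have color `i`. -/
def HasMonoCopy {V : Type} {n k : ℕ} (G : SimpleGraph V)
    (c : Sym2 (Fin n) → Fin k) (i : Fin k) : Prop :=
  ∃ f : V → Fin n, Function.Injective f ∧ ∀ u v : V, G.Adj u v → c s(f u, f v) = i

/-!
Suppose a colouring of `K₁₉` has no `B₄` in colour 0 and no `B₅` in colour 1. Then an edge of
colour 0 lies in at most one triangle of colour 0 and an edge of colour 1 in at most two triangles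
of colour 1, so there are at most `2 · 19²` ordered monochromatic triangles. On the other hand a
vertex with `r` and `18 - r` neighbours in the two colours is the centre of `2r(18 - r) ≤ 162`
ordered bichromatic cherries, and a non-monochromatic triangle has exactly two bichromatic corners;
Goodman's count then leaves at least `1197` ordered monochromatic triangles.
-/

open Finset

lemma card_filter_prod_eq_sum {α β : Type*} [Fintype α] [Fintype β] (P : α × β → Prop)
    [DecidablePred P] : #{x | P x} = ∑ a, #{b | P (a, b)} := by
  simp only [card_filter]
  exact Fintype.sum_prod_type _

lemma two_mul_card_filter_ne_le {α : Type*} [DecidableEq α] (s : Finset α) (f : α → Fin 2) :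
    2 * #{p ∈ s ×ˢ s | f p.1 ≠ f p.2} ≤ #s ^ 2 := by
  set a := s.filter (f · = 0)
  set b := s.filter (f · ≠ 0)
  have hsplit : {p ∈ s ×ˢ s | f p.1 ≠ f p.2} = a ×ˢ b ∪ b ×ˢ a := by
    ext p
    simp only [mem_filter, mem_product, mem_union, a, b]
    have hFin2 : ∀ x y : Fin 2, x ≠ y ↔ x = 0 ∧ y ≠ 0 ∨ x ≠ 0 ∧ y = 0 := by decide
    rw [hFin2]
    tauto
  have hdisj : Disjoint (a ×ˢ b) (b ×ˢ a) := by
    rw [disjoint_left]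
    simp only [mem_product, mem_filter, a, b]
    omega
  have hab : #a + #b = #s := card_filter_add_card_filter_not _
  rw [hsplit, card_union_of_disjoint hdisj, card_product, card_product, ← hab]
  nlinarith [four_mul_le_sq_add #a #b]

section Counting

variable {V κ : Type*}

/-- The path `v - u - w` centred at `u`, encoded as the triple `(u, v, w)`. -/
def IsCherry (t : V × V × V) : Prop := t.2.1 ≠ t.1 ∧ t.2.2 ≠ t.1 ∧ t.2.1 ≠ t.2.2

def IsBichromaticCherry (c : Sym2 V → κ) (t : V × V × V) : Prop :=
  IsCherry t ∧ c s(t.1, t.2.1) ≠ c s(t.1, t.2.2)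

def IsMonoTriangle (c : Sym2 V → κ) (t : V × V × V) : Prop :=
  IsCherry t ∧ c s(t.1, t.2.2) = c s(t.1, t.2.1) ∧ c s(t.2.1, t.2.2) = c s(t.1, t.2.1)

variable [DecidableEq V] [DecidableEq κ]

instance : DecidablePred (IsCherry (V := V)) :=
  fun _ => inferInstanceAs (Decidable (_ ∧ _ ∧ _))

instance (c : Sym2 V → κ) : DecidablePred (IsBichromaticCherry c) :=
  fun _ => inferInstanceAs (Decidable (_ ∧ _))

instance (c : Sym2 V → κ) : DecidablePred (IsMonoTriangle c) :=
  fun _ => inferInstanceAs (Decidable (_ ∧ _ ∧ _))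

variable [Fintype V]

lemma card_cherries : #{t : V × V × V | IsCherry t} =
    Fintype.card V * (Fintype.card V - 1) * (Fintype.card V - 2) := by
  have hfiber (u : V) : ({p | IsCherry (u, p)} : Finset (V × V)) = (univ.erase u).offDiag := by
    ext p
    rw [mem_filter, mem_offDiag, mem_erase, mem_erase]
    simp [IsCherry]
  simp only [card_filter_prod_eq_sum, hfiber, offDiag_card, card_erase_of_mem (mem_univ _),
    card_univ, sum_const, smul_eq_mul, ← Nat.mul_sub_one, Nat.sub_sub, mul_assoc]

lemma two_mul_card_bichromaticCherries_le (c : Sym2 V → Fin 2) :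
    2 * #{t | IsBichromaticCherry c t} ≤ Fintype.card V * (Fintype.card V - 1) ^ 2 := by
  have hfiber (u : V) : ({p | IsBichromaticCherry c (u, p)} : Finset (V × V)) =
      {p ∈ univ.erase u ×ˢ univ.erase u | c s(u, p.1) ≠ c s(u, p.2)} := by
    ext ⟨v, w⟩
    rw [mem_filter, mem_filter]
    simp only [IsBichromaticCherry, IsCherry, mem_univ, true_and, mem_product, mem_erase,
      and_true]
    constructor
    · rintro ⟨⟨hv, hw, -⟩, hc⟩
      exact ⟨⟨hv, hw⟩, hc⟩
    · rintro ⟨⟨hv, hw⟩, hc⟩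
      exact ⟨⟨hv, hw, fun hvw => hc (hvw ▸ rfl)⟩, hc⟩
  rw [card_filter_prod_eq_sum, mul_sum]
  calc ∑ u, 2 * #({p | IsBichromaticCherry c (u, p)} : Finset (V × V))
      ≤ ∑ _u : V, (Fintype.card V - 1) ^ 2 := by
        gcongr with u
        rw [hfiber, ← card_univ, ← card_erase_of_mem (mem_univ u)]
        exact two_mul_card_filter_ne_le (univ.erase u) (fun v => c s(u, v))
    _ = _ := by simp

/-- Goodman's formula in ordered form: a triangle that is not monochromatic has exactly two
bichromatic corners, a monochromatic one has none. -/
lemma three_mul_card_bichromaticCherries_add_two_mul_card_monoTriangles (c : Sym2 V → Fin 2) :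
    3 * #{t | IsBichromaticCherry c t} + 2 * #{t | IsMonoTriangle c t} =
      2 * #{t : V × V × V | IsCherry t} := by
  let ρ : V × V × V ≃ V × V × V := (Equiv.prodComm V (V × V)).trans (Equiv.prodAssoc V V V)
  let β (t : V × V × V) : ℕ := if IsBichromaticCherry c t then 1 else 0
  have hcorners (t : V × V × V) :
      β t + β (ρ t) + β (ρ (ρ t)) + 2 * (if IsMonoTriangle c t then 1 else 0) =
        2 * (if IsCherry t then 1 else 0) := by
    obtain ⟨u, v, w⟩ := t
    have hρ : IsCherry (v, w, u) ↔ IsCherry (u, v, w) := by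
      simp only [IsCherry]; tauto
    have hρρ : IsCherry (w, u, v) ↔ IsCherry (u, v, w) := by
      simp only [IsCherry]; tauto
    simp only [β, ρ, Equiv.trans_apply, Equiv.prodComm_apply, Equiv.prodAssoc_apply, Prod.swap,
      IsBichromaticCherry, IsMonoTriangle, hρ, hρρ]
    by_cases h : IsCherry (u, v, w)
    · simp only [h, true_and]
      rw [Sym2.eq_swap (a := v) (b := u), Sym2.eq_swap (a := w) (b := u),
        Sym2.eq_swap (a := w) (b := v)]
      generalize c s(u, v) = a, c s(u, w) = b, c s(v, w) = d
      revert a b d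
      decide
    · simp [h]
  simp only [card_filter]
  calc 3 * ∑ t, β t + 2 * ∑ t, (if IsMonoTriangle c t then 1 else 0)
      = ∑ t, (β t + β (ρ t) + β (ρ (ρ t)) + 2 * (if IsMonoTriangle c t then 1 else 0)) := by
        simp only [sum_add_distrib, Equiv.sum_comp ρ β, Equiv.sum_comp ρ (fun t => β (ρ t)),
          ← mul_sum]
        ring
    _ = ∑ t, 2 * (if IsCherry t then 1 else 0) := sum_congr rfl fun t _ => hcorners t
    _ = _ := (mul_sum ..).symm

lemma card_monoTriangles_le (c : Sym2 V → κ) {k : ℕ}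
    (hk : ∀ u v, #{w | IsMonoTriangle c (u, v, w)} ≤ k) :
    #{t | IsMonoTriangle c t} ≤ Fintype.card V ^ 2 * k := by
  simp_rw [card_filter_prod_eq_sum]
  calc ∑ u, ∑ v, #{w | IsMonoTriangle c (u, v, w)} ≤ ∑ _u : V, ∑ _v : V, k := by
        gcongr with u _ v
        exact hk u v
    _ = Fintype.card V ^ 2 * k := by simp [sq, mul_assoc]

end Counting

lemma hasMonoCopy_book_of_le_card {n k m : ℕ} (c : Sym2 (Fin n) → Fin k) {u v : Fin n}
    (huv : u ≠ v) (hm : m ≤ #{w | IsMonoTriangle c (u, v, w)}) :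
    HasMonoCopy (book m) c (c s(u, v)) := by
  obtain ⟨pages, hsub, hcard⟩ := exists_subset_card_eq hm
  let page := pages.orderEmbOfFin hcard
  have hpage (j : Fin m) : IsMonoTriangle c (u, v, page j) := by
    simpa using hsub (pages.orderEmbOfFin_mem hcard j)
  have hspine_page (x : Fin 2) (j : Fin m) :
      ![u, v] x ≠ page j ∧ c s(![u, v] x, page j) = c s(u, v) := by
    obtain ⟨⟨-, hu, hv⟩, hcu, hcv⟩ := hpage j
    fin_cases x
    · simpa using And.intro (Ne.symm hu) hcu
    · simpa using And.intro hv hcv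
  refine ⟨Sum.elim ![u, v] page, ?_, ?_⟩
  · rintro (x | x) (y | y) hxy
    · fin_cases x <;> fin_cases y <;> simp_all [huv.symm]
    · exact absurd hxy (hspine_page x y).1
    · exact absurd hxy.symm (hspine_page y x).1
    · exact congrArg Sum.inr (page.injective hxy)
  · rintro (x | x) (y | y) ⟨hxy, hleft⟩
    · fin_cases x <;> fin_cases y <;> simp_all [Sym2.eq_swap]
    · exact (hspine_page x y).2
    · rw [Sym2.eq_swap]
      exact (hspine_page y x).2
    · simp at hleft

/-- `R(B₄, B₅) ≤ 19`, where `B₄ = book 2` and `B₅ = book 3`. -/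
theorem ramsey_B4_B5_le :
    ∀ c : Sym2 (Fin 19) → Fin 2,
      HasMonoCopy (book 2) c 0 ∨ HasMonoCopy (book 3) c 1 := by
  intro c
  by_contra! hc
  obtain ⟨hred, hblue⟩ := hc
  have hpages (u v : Fin 19) : #{w | IsMonoTriangle c (u, v, w)} ≤ 2 := by
    by_contra! hlt
    have huv : u ≠ v := by
      rintro rfl
      simp [IsMonoTriangle, IsCherry] at hlt
    obtain hcuv | hcuv : c s(u, v) = 0 ∨ c s(u, v) = 1 := by omega
    · exact hred (hcuv ▸ hasMonoCopy_book_of_le_card c huv hlt.le)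
    · exact hblue (hcuv ▸ hasMonoCopy_book_of_le_card c huv hlt)
  have hmono := card_monoTriangles_le c hpages
  have hbichromatic := two_mul_card_bichromaticCherries_le c
  have hgoodman := three_mul_card_bichromaticCherries_add_two_mul_card_monoTriangles c
  rw [card_cherries] at hgoodman
  simp only [Fintype.card_fin] at hmono hbichromatic hgoodman
  omega
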